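/- Let B be a commutative ring and let F be a functor from commutative B-algebras to groups. If two points x₀, x₁ ∈ F(B) are R-equivalent, then they are directly R-equivalent. -/

import Mathlib

/-!
The pairs `(x(0), x(1))` with `x ∈ F(C[t]_Σ)` form a subgroup of `F(C) × F(C)`, the image of
the group homomorphism `F(ev₀) × F(ev₁)`, and it contains the diagonal (take `x` constant).
A subgroup `H ≤ G × G` containing the diagonal is already an equivalence relation on `G`:
`(b, a) = (b, b) (a, b)⁻¹ (a, a)` and `(a, c) = (a, b) (b, b)⁻¹ (b, c)`.
-/

noncomputable section

open Polynomial

/-- The multiplicative subset `Σ` of `B[t]` consisting of the polynomials whose values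
at `t = 0` and `t = 1` are units of `B`. -/
def RSigma (B : Type*) [CommRing B] : Submonoid (Polynomial B) where
  carrier := {P | IsUnit (P.eval 0) ∧ IsUnit (P.eval 1)}
  mul_mem' := fun ha hb =>
    ⟨by rw [eval_mul]; exact ha.1.mul hb.1, by rw [eval_mul]; exact ha.2.mul hb.2⟩
  one_mem' := ⟨by simp, by simp⟩

theorem mem_RSigma {B : Type*} [CommRing B] {P : Polynomial B} :
    P ∈ RSigma B ↔ IsUnit (P.eval 0) ∧ IsUnit (P.eval 1) := Iff.rfl

/-- The localization `B[t]_Σ` of `B[t]` at `Σ`. -/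
abbrev RLoc (B : Type*) [CommRing B] := Localization (RSigma B)

/-- Evaluation at `t = 0`, extended to `B[t]_Σ`, as a `B`-algebra homomorphism. -/
def ev0 (B : Type*) [CommRing B] : RLoc B →ₐ[B] B :=
  IsLocalization.liftAlgHom (M := RSigma B) (f := Polynomial.aeval (0 : B))
    (fun y => by simpa using (mem_RSigma.mp y.2).1)

/-- Evaluation at `t = 1`, extended to `B[t]_Σ`, as a `B`-algebra homomorphism. -/
def ev1 (B : Type*) [CommRing B] : RLoc B →ₐ[B] B :=
  IsLocalization.liftAlgHom (M := RSigma B) (f := Polynomial.aeval (1 : B))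
    (fun y => by simpa using (mem_RSigma.mp y.2).2)


universe u

/-- Evaluation at `t = 0` on `C[t]_{Σ_C}`, as a homomorphism of `B`-algebras. -/
def ev0R (B : Type u) [CommRing B] (C : Type u) [CommRing C] [Algebra B C] :
    RLoc C →ₐ[B] C :=
  IsLocalization.liftAlgHom (M := RSigma C)
    (f := (Polynomial.aeval (0 : C)).restrictScalars B)
    (fun y => by simpa using (mem_RSigma.mp y.2).1)

/-- Evaluation at `t = 1` on `C[t]_{Σ_C}`, as a homomorphism of `B`-algebras. -/
def ev1R (B : Type u) [CommRing B] (C : Type u) [CommRing C] [Algebra B C] :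
    RLoc C →ₐ[B] C :=
  IsLocalization.liftAlgHom (M := RSigma C)
    (f := (Polynomial.aeval (1 : C)).restrictScalars B)
    (fun y => by simpa using (mem_RSigma.mp y.2).2)


/-- A functor from the category of commutative `B`-algebras (in the universe `u`)
to the category of groups. -/
structure GroupValuedFunctor (B : Type u) [CommRing B] where
  obj : (C : Type u) → [CommRing C] → [Algebra B C] → Type u
  grp : (C : Type u) → [CommRing C] → [Algebra B C] → Group (obj C)
  map : {C D : Type u} → [CommRing C] → [Algebra B C] → [CommRing D] → [Algebra B D] →
    (C →ₐ[B] D) → obj C → obj D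
  map_id : ∀ (C : Type u) [CommRing C] [Algebra B C], map (AlgHom.id B C) = id
  map_comp : ∀ {C D E : Type u} [CommRing C] [Algebra B C] [CommRing D] [Algebra B D]
    [CommRing E] [Algebra B E] (f : C →ₐ[B] D) (g : D →ₐ[B] E),
    map (g.comp f) = map g ∘ map f
  map_mul : ∀ {C D : Type u} [CommRing C] [Algebra B C] [CommRing D] [Algebra B D]
    (f : C →ₐ[B] D) (x y : obj C),
    haveI := grp C; haveI := grp D; map f (x * y) = map f x * map f y

/-- Two points `x₀ x₁ ∈ F(C)` are directly R-equivalent if they are the two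
evaluations of a point of `F(C[t]_Σ)`. -/
def DirectRG (B : Type u) [CommRing B] (F : GroupValuedFunctor B)
    (C : Type u) [CommRing C] [Algebra B C] (x₀ x₁ : F.obj C) : Prop :=
  ∃ x : F.obj (RLoc C), F.map (ev0R B C) x = x₀ ∧ F.map (ev1R B C) x = x₁

theorem Subgroup.equivalence_of_forall_mk_self_mem {G : Type*} [Group G] (H : Subgroup (G × G))
    (h_diag : ∀ g, (g, g) ∈ H) : Equivalence fun a b => (a, b) ∈ H where
  refl := h_diag
  symm {a b} hab := by
    simpa using H.mul_mem (H.mul_mem (h_diag b) (H.inv_mem hab)) (h_diag a)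
  trans {a b c} hab hbc := by
    simpa using H.mul_mem (H.mul_mem hab (H.inv_mem (h_diag b))) hbc

section Evaluation

variable (B : Type u) [CommRing B] (C : Type u) [CommRing C] [Algebra B C]

theorem ev0R_comp_toAlgHom :
    (ev0R B C).comp (IsScalarTower.toAlgHom B C (RLoc C)) = .id B C := by
  ext c
  simp [ev0R, IsScalarTower.algebraMap_apply C C[X] (RLoc C), IsLocalization.lift_eq]

theorem ev1R_comp_toAlgHom :
    (ev1R B C).comp (IsScalarTower.toAlgHom B C (RLoc C)) = .id B C := by
  ext c
  simp [ev1R, IsScalarTower.algebraMap_apply C C[X] (RLoc C), IsLocalization.lift_eq]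

end Evaluation

namespace GroupValuedFunctor

attribute [local instance] GroupValuedFunctor.grp

variable {B : Type u} [CommRing B] (F : GroupValuedFunctor B)

def mapHom {C D : Type u} [CommRing C] [Algebra B C] [CommRing D] [Algebra B D]
    (f : C →ₐ[B] D) : F.obj C →* F.obj D :=
  MonoidHom.mk' (F.map f) (F.map_mul f)

theorem mapHom_mapHom {C D E : Type u} [CommRing C] [Algebra B C] [CommRing D]
    [Algebra B D] [CommRing E] [Algebra B E] (f : C →ₐ[B] D) (g : D →ₐ[B] E) (x : F.obj C) :
    F.mapHom g (F.mapHom f x) = F.mapHom (g.comp f) x := by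
  simp [mapHom, F.map_comp]

theorem mapHom_id {C : Type u} [CommRing C] [Algebra B C] (x : F.obj C) :
    F.mapHom (.id B C) x = x := by
  simp [mapHom, F.map_id]

variable (C : Type u) [CommRing C] [Algebra B C]

def evalPair : F.obj (RLoc C) →* F.obj C × F.obj C :=
  (F.mapHom (ev0R B C)).prod (F.mapHom (ev1R B C))

theorem directRG_iff_mem_range_evalPair {x₀ x₁ : F.obj C} :
    DirectRG B F C x₀ x₁ ↔ (x₀, x₁) ∈ (F.evalPair C).range := by
  simp [DirectRG, evalPair, mapHom]

theorem mk_self_mem_range_evalPair (x : F.obj C) : (x, x) ∈ (F.evalPair C).range :=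
  ⟨F.mapHom (IsScalarTower.toAlgHom B C (RLoc C)) x, by
    simp only [evalPair, MonoidHom.prod_apply, mapHom_mapHom, ev0R_comp_toAlgHom,
      ev1R_comp_toAlgHom, mapHom_id]⟩

theorem equivalence_directRG : Equivalence (DirectRG B F C) := by
  have h_range : DirectRG B F C = fun x₀ x₁ => (x₀, x₁) ∈ (F.evalPair C).range := by
    ext
    exact F.directRG_iff_mem_range_evalPair C
  rw [h_range]
  exact Subgroup.equivalence_of_forall_mk_self_mem _ (F.mk_self_mem_range_evalPair C)

end GroupValuedFunctor

theorem R_equivalent_iff_directly_R_equivalent_for_group_functors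
    (B : Type u) [CommRing B] (F : GroupValuedFunctor B) (x₀ x₁ : F.obj B)
    (h : Relation.EqvGen (DirectRG B F B) x₀ x₁) :
    DirectRG B F B x₀ x₁ :=
  (F.equivalence_directRG B).eqvGen_iff.mp h
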